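/- Suppose the solution of the closed-loop multi-agent system exists on [t_0, ω), ω < ∞, and the funnel inequalities |ν_{ij}^p(t)| < ψ_{ij}^p(t) hold on [t_0, ω) for all edges and components. Suppose there is an increasing sequence τ_k → ω and a component p such that the edge set E^p := {(j, i) ∈ E : lim_{k→∞} ν_{ij}^p(τ_k)/ψ_{ij}^p(τ_k) = 1} is nonempty. Then the directed graph (N, E^p) has no loop. In particular, since in an undirected graph every pair of mutual edges {(i,j),(j,i)} forms a loop, E^p cannot contain both (j, i) and (i, j). -/
import Mathlib


open Filter

/-- A loop (elementary closed directed path of positive length). -/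
def HasLoop {n : ℕ} (E : Set (Fin n × Fin n)) : Prop :=
  ∃ (l : ℕ) (f : ℕ → Fin n), 0 < l ∧ f 0 = f l ∧
    (∀ k1 k2, 1 ≤ k1 → k1 < k2 → k2 ≤ l → f k1 ≠ f k2) ∧
    ∀ k < l, (f k, f (k + 1)) ∈ E

/-- If along a time sequence `τ_k → ω` the set `E^p` of edges whose normalized output
difference `ν_{ij}^p/ψ_{ij}^p` tends to `1` is nonempty, then the directed graph
`(N, E^p)` has no loop; in particular `E^p` cannot contain both `(j, i)` and `(i, j)`. -/
theorem stmt16 {N : ℕ} (E : Set (Fin N × Fin N)) (t0 ω : ℝ) (hω : t0 < ω)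
    (yp : Fin N → ℝ → ℝ) (ψ : Fin N → Fin N → ℝ → ℝ)
    (hψ : ∀ j i t, t0 ≤ t → t < ω → 0 < ψ j i t)
    (hfun : ∀ j i, (j, i) ∈ E → ∀ t, t0 ≤ t → t < ω → |yp j t - yp i t| < ψ j i t)
    (τ : ℕ → ℝ) (hτmono : StrictMono τ) (hτmem : ∀ k, t0 ≤ τ k ∧ τ k < ω)
    (hτlim : Tendsto τ atTop (nhds ω))
    (Ep : Set (Fin N × Fin N))
    (hEp : Ep = {e | e ∈ E ∧ Tendsto
        (fun k => (yp e.1 (τ k) - yp e.2 (τ k)) / ψ e.1 e.2 (τ k))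
        atTop (nhds 1)})
    (hne : Ep.Nonempty) :
    ¬ HasLoop Ep ∧ ∀ j i, ¬ ((j, i) ∈ Ep ∧ (i, j) ∈ Ep) := by
  -- key: edges in Ep eventually have positive output difference
  have key : ∀ e ∈ Ep, ∀ᶠ k in atTop, yp e.2 (τ k) < yp e.1 (τ k) := by
    intro e he
    rw [hEp] at he
    have hpos := he.2.eventually (eventually_gt_nhds (by norm_num : (0:ℝ) < 1))
    filter_upwards [hpos] with k hk
    have hψk := hψ e.1 e.2 (τ k) (hτmem k).1 (hτmem k).2
    have : 0 < yp e.1 (τ k) - yp e.2 (τ k) := by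
      have := (div_pos_iff.mp hk)
      rcases this with ⟨h1, _⟩ | ⟨_, h2⟩
      · exact h1
      · linarith
    linarith
  have noloop : ¬ HasLoop Ep := by
    rintro ⟨l, f, hl, hcl, _, hedge⟩
    have hall : ∀ᶠ K in atTop, ∀ k ∈ Finset.range l,
        yp (f (k+1)) (τ K) < yp (f k) (τ K) := by
      rw [eventually_all_finset]
      intro k hk
      exact key _ (hedge k (Finset.mem_range.mp hk))
    obtain ⟨K, hK⟩ := hall.exists
    have chain : ∀ m, m + 1 ≤ l → yp (f (m+1)) (τ K) < yp (f 0) (τ K) := by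
      intro m
      induction m with
      | zero => intro h; exact hK 0 (Finset.mem_range.mpr h)
      | succ n ih =>
        intro h
        have h1 := hK (n+1) (Finset.mem_range.mpr h)
        have h2 := ih (by omega)
        linarith
    obtain ⟨m, rfl⟩ : ∃ m, l = m + 1 := ⟨l - 1, by omega⟩
    have := chain m le_rfl
    rw [← hcl] at this
    exact lt_irrefl _ this
  refine ⟨noloop, ?_⟩
  rintro j i ⟨h1, h2⟩
  obtain ⟨K, hK1, hK2⟩ := ((key _ h1).and (key _ h2)).exists
  simp only at hK1 hK2
  exact lt_irrefl _ (hK1.trans hK2)
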